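/- arXiv:2107.02888 — 11 statements merged into one kernel-verified Lean document; each statement's English description precedes it below -/
import Mathlib

section
/- The dictator's utility U is strictly concave on ℝ: for all real s ≠ t and all λ with 0 < λ < 1, one has U(λ·s + (1−λ)·t) > λ·U(s) + (1−λ)·U(t). -/
noncomputable def Ubar (a b T Wi Wj Di Dj s : ℝ) : ℝ :=
  a * (Wi + s * T)
    - b * (((Wi - Wj + 2 * s * T - T) / 2) ^ 2 + ((Di - Dj + 2 * s * T - T) / 2) ^ 2)

noncomputable def Uhat (a b T eta Wi Wj Di Dj s : ℝ) : ℝ :=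
  Ubar a b T Wi Wj Di Dj s + a * eta * (Di + s * T)

noncomputable def Udict (a b T eta Wi Wj Di Dj s : ℝ) : ℝ :=
  if Di + s * T < 0 then Uhat a b T eta Wi Wj Di Dj s else Ubar a b T Wi Wj Di Dj s

lemma Udict_eq (a b T eta Wi Wj Di Dj s : ℝ) :
    Udict a b T eta Wi Wj Di Dj s
      = Ubar a b T Wi Wj Di Dj s + a * eta * min (Di + s * T) 0 := by
  unfold Udict Uhat
  split
  · rw [min_eq_left (le_of_lt ‹_›)]
  · rw [min_eq_right (not_lt.mp ‹_›)]; ring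

theorem stmt2 (a b T eta Wi Wj Di Dj : ℝ)
    (ha : 0 < a) (hb : 0 < b) (hT : 0 < T) (heta0 : 0 ≤ eta) (heta1 : eta < 1) :
    ∀ s t : ℝ, s ≠ t → ∀ l : ℝ, 0 < l → l < 1 →
      l * Udict a b T eta Wi Wj Di Dj s + (1 - l) * Udict a b T eta Wi Wj Di Dj t
        < Udict a b T eta Wi Wj Di Dj (l * s + (1 - l) * t) := by
  intro s t hst l hl0 hl1
  rw [Udict_eq, Udict_eq, Udict_eq]
  have hbar : l * Ubar a b T Wi Wj Di Dj s + (1 - l) * Ubar a b T Wi Wj Di Dj t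
      < Ubar a b T Wi Wj Di Dj (l * s + (1 - l) * t) := by
    have h : Ubar a b T Wi Wj Di Dj (l * s + (1 - l) * t)
        - (l * Ubar a b T Wi Wj Di Dj s + (1 - l) * Ubar a b T Wi Wj Di Dj t)
        = 2 * b * T ^ 2 * (l * (1 - l)) * (s - t) ^ 2 := by
      unfold Ubar; ring
    have hpos : 0 < 2 * b * T ^ 2 * (l * (1 - l)) * (s - t) ^ 2 := by
      have h2 : 0 < (s - t) ^ 2 := (sq_nonneg _).lt_of_ne (Ne.symm (pow_ne_zero 2 (sub_ne_zero.mpr hst)))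
      have h3 : 0 < l * (1 - l) := mul_pos hl0 (by linarith)
      have h4 : (0:ℝ) < 2 * b * T ^ 2 := by positivity
      exact mul_pos (mul_pos h4 h3) h2
    linarith
  have hmin : l * min (Di + s * T) 0 + (1 - l) * min (Di + t * T) 0
      ≤ min (Di + (l * s + (1 - l) * t) * T) 0 := by
    have h1 : l * min (Di + s * T) 0 + (1 - l) * min (Di + t * T) 0
        ≤ Di + (l * s + (1 - l) * t) * T := by
      have := min_le_left (Di + s * T) 0
      have := min_le_left (Di + t * T) 0
      nlinarith
    have h2 : l * min (Di + s * T) 0 + (1 - l) * min (Di + t * T) 0 ≤ 0 := by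
      have := min_le_right (Di + s * T) 0
      have := min_le_right (Di + t * T) 0
      nlinarith
    exact le_min h1 h2
  have hae : 0 ≤ a * eta := by positivity
  nlinarith [mul_le_mul_of_nonneg_left hmin hae]
end

section
/- The dictator's utility U has exactly one global maximizer on ℝ: there exists a unique real number s* such that U(s) ≤ U(s*) for every real s. -/
/-!
Since `0 ≤ a * eta` and `Uhat - Ubar = a * eta * (Di + s * T)`, the dictator's utility is the pointwise
minimum of `Ubar` and `Uhat`. Both are quadratics in `s` with leading coefficient `-2 b T² < 0`,
so their minimum is continuous, strictly concave and tends to `-∞` away from compact sets: the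
extreme value theorem gives a maximizer, and strict concavity makes it unique.
-/

open Filter Set

theorem StrictConcaveOn.existsUnique_forall_ge {E : Type*} [TopologicalSpace E] [AddCommGroup E]
    [Module ℝ E] {f : E → ℝ} (hf : StrictConcaveOn ℝ univ f) (hcont : Continuous f)
    (hlim : Tendsto f (cocompact E) atBot) : ∃! x, ∀ y, f y ≤ f x := by
  obtain ⟨x, hx⟩ := hcont.exists_forall_ge hlim
  exact ⟨x, hx, fun y hy => hf.eq_of_isMaxOn (fun z _ => hy z) (fun z _ => hx z) trivial trivial⟩

theorem strictConcaveOn_quadratic {α : ℝ} (hα : α < 0) (β γ : ℝ) :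
    StrictConcaveOn ℝ univ fun x : ℝ => α * x ^ 2 + β * x + γ := by
  refine ⟨convex_univ, fun x _ y _ hxy p q hp hq hpq => ?_⟩
  obtain rfl : q = 1 - p := by linarith
  have hgap : 0 < -α * p * (1 - p) * (x - y) ^ 2 := by
    have := sq_pos_of_ne_zero (sub_ne_zero.2 hxy)
    have := neg_pos.2 hα
    positivity
  simp only [smul_eq_mul]
  linear_combination hgap

theorem tendsto_quadratic_cocompact_atBot {α : ℝ} (hα : α < 0) (β γ : ℝ) :
    Tendsto (fun x : ℝ => α * x ^ 2 + β * x + γ) (cocompact ℝ) atBot := by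
  have hbound (x : ℝ) : α * x ^ 2 + β * x + γ ≤ |x| * (α * |x| + |β|) + γ := by
    have : β * x ≤ |β| * |x| := abs_mul β x ▸ le_abs_self _
    nlinarith [sq_abs x]
  have hlim : Tendsto (fun t : ℝ => t * (α * t + |β|) + γ) atTop atBot :=
    tendsto_atBot_add_const_right _ _ <| tendsto_id.atTop_mul_atBot₀ <|
      tendsto_atBot_add_const_right _ _ (tendsto_id.const_mul_atTop_of_neg hα)
  rw [cocompact_eq_atBot_atTop, ← comap_abs_atTop]
  exact tendsto_atBot_mono hbound (hlim.comp tendsto_comap)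

theorem Ubar_eq_quadratic {a b T Wi Wj Di Dj : ℝ} :
    Ubar a b T Wi Wj Di Dj = fun s => -(2 * b * T ^ 2) * s ^ 2
      + (a * T - b * T * (Wi - Wj + Di - Dj - 2 * T)) * s
      + (a * Wi - b * ((Wi - Wj - T) ^ 2 + (Di - Dj - T) ^ 2) / 4) := by
  ext s
  unfold Ubar
  ring

theorem Uhat_eq_quadratic {a b T eta Wi Wj Di Dj : ℝ} :
    Uhat a b T eta Wi Wj Di Dj = fun s => -(2 * b * T ^ 2) * s ^ 2
      + (a * T - b * T * (Wi - Wj + Di - Dj - 2 * T) + a * eta * T) * s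
      + (a * Wi - b * ((Wi - Wj - T) ^ 2 + (Di - Dj - T) ^ 2) / 4 + a * eta * Di) := by
  ext s
  unfold Uhat Ubar
  ring

theorem Udict_eq_inf {a b T eta Wi Wj Di Dj : ℝ} (h : 0 ≤ a * eta) :
    Udict a b T eta Wi Wj Di Dj = Ubar a b T Wi Wj Di Dj ⊓ Uhat a b T eta Wi Wj Di Dj := by
  ext s
  simp only [Udict, Uhat, Pi.inf_apply]
  split_ifs with hs
  · exact (min_eq_right (by nlinarith)).symm
  · exact (min_eq_left (by nlinarith)).symm

theorem stmt3_general (a b T eta Wi Wj Di Dj : ℝ)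
    (ha : 0 < a) (hb : 0 < b) (hT : 0 < T) (heta0 : 0 ≤ eta) :
    ∃! sstar : ℝ, ∀ s : ℝ, Udict a b T eta Wi Wj Di Dj s ≤ Udict a b T eta Wi Wj Di Dj sstar := by
  have hα : -(2 * b * T ^ 2) < 0 := neg_neg_of_pos (by positivity)
  rw [Udict_eq_inf (mul_nonneg ha.le heta0)]
  refine StrictConcaveOn.existsUnique_forall_ge ?_ ?_ ?_
  · rw [Ubar_eq_quadratic, Uhat_eq_quadratic]
    exact (strictConcaveOn_quadratic hα _ _).inf (strictConcaveOn_quadratic hα _ _)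
  · rw [Ubar_eq_quadratic, Uhat_eq_quadratic]
    fun_prop
  · refine tendsto_atBot_mono (fun s => inf_le_left) ?_
    rw [Ubar_eq_quadratic]
    exact tendsto_quadratic_cocompact_atBot hα _ _

theorem stmt3 (a b T eta Wi Wj Di Dj : ℝ)
    (ha : 0 < a) (hb : 0 < b) (hT : 0 < T) (heta0 : 0 ≤ eta) (heta1 : eta < 1) :
    ∃! sstar : ℝ, ∀ s : ℝ, Udict a b T eta Wi Wj Di Dj s ≤ Udict a b T eta Wi Wj Di Dj sstar :=
  stmt3_general a b T eta Wi Wj Di Dj ha hb hT heta0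
end

section
/- Proposition 1, case (i): if a/b > H, then U attains a strict global maximum at sH, i.e., for every real s with s ≠ sH one has U(s) < U(sH). -/
/-!
`Ubar` is a concave quadratic in `s` with vertex `sH`, and the bonus `a η (Δi + sT)` that `Uhat`
adds is nonpositive exactly where `Uhat` is used, so `U ≤ Ubar` everywhere. The condition
`a/b > H` says `Δi + sH T > 0`, so `U` and `Ubar` agree at `sH`, which is therefore the strict
maximiser of `U`.
-/

noncomputable def sH (a b T Wi Wj Di Dj : ℝ) : ℝ :=
  a / b * (1 / (4 * T)) + 1 / 2 + (Wj - Wi) / (4 * T) + (Dj - Di) / (4 * T)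

section

variable {a b T eta Wi Wj Di Dj : ℝ}

theorem Ubar_sH_sub_Ubar (hb : b ≠ 0) (hT : T ≠ 0) (s : ℝ) :
    Ubar a b T Wi Wj Di Dj (sH a b T Wi Wj Di Dj) - Ubar a b T Wi Wj Di Dj s
      = 2 * b * ((s - sH a b T Wi Wj Di Dj) * T) ^ 2 := by
  simp only [Ubar, sH]
  field_simp
  ring

theorem Ubar_lt_Ubar_sH (hb : 0 < b) (hT : 0 < T) {s : ℝ} (hs : s ≠ sH a b T Wi Wj Di Dj) :
    Ubar a b T Wi Wj Di Dj s < Ubar a b T Wi Wj Di Dj (sH a b T Wi Wj Di Dj) := by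
  rw [← sub_pos, Ubar_sH_sub_Ubar hb.ne' hT.ne']
  have : (s - sH a b T Wi Wj Di Dj) * T ≠ 0 := mul_ne_zero (sub_ne_zero.mpr hs) hT.ne'
  positivity

theorem add_sH_mul (hT : T ≠ 0) :
    Di + sH a b T Wi Wj Di Dj * T = (a / b - (Wi - Wj - 2 * T - 3 * Di - Dj)) / 4 := by
  simp only [sH]
  field_simp
  ring

theorem Udict_le_Ubar (ha : 0 ≤ a) (heta : 0 ≤ eta) (s : ℝ) :
    Udict a b T eta Wi Wj Di Dj s ≤ Ubar a b T Wi Wj Di Dj s := by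
  unfold Udict Uhat
  split_ifs with hneg
  · nlinarith [mul_nonneg ha heta]
  · rfl

theorem Udict_eq_Ubar_of_nonneg {s : ℝ} (hs : 0 ≤ Di + s * T) :
    Udict a b T eta Wi Wj Di Dj s = Ubar a b T Wi Wj Di Dj s :=
  if_neg hs.not_gt

end

theorem stmt4_general (a b T eta Wi Wj Di Dj : ℝ)
    (ha : 0 < a) (hb : 0 < b) (hT : 0 < T) (heta0 : 0 ≤ eta)
    (hcase : a / b > Wi - Wj - 2 * T - 3 * Di - Dj) :
    ∀ s : ℝ, s ≠ (a / b * (1 / (4 * T)) + 1 / 2 + (Wj - Wi) / (4 * T) + (Dj - Di) / (4 * T)) →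
      Udict a b T eta Wi Wj Di Dj s < Udict a b T eta Wi Wj Di Dj (a / b * (1 / (4 * T)) + 1 / 2 + (Wj - Wi) / (4 * T) + (Dj - Di) / (4 * T)) := by
  intro s hs
  change s ≠ sH a b T Wi Wj Di Dj at hs
  change _ < Udict a b T eta Wi Wj Di Dj (sH a b T Wi Wj Di Dj)
  have hsH : 0 ≤ Di + sH a b T Wi Wj Di Dj * T := by
    rw [add_sH_mul hT.ne']
    linarith
  calc Udict a b T eta Wi Wj Di Dj s ≤ Ubar a b T Wi Wj Di Dj s := Udict_le_Ubar ha.le heta0 s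
    _ < Ubar a b T Wi Wj Di Dj (sH a b T Wi Wj Di Dj) := Ubar_lt_Ubar_sH hb hT hs
    _ = Udict a b T eta Wi Wj Di Dj (sH a b T Wi Wj Di Dj) := (Udict_eq_Ubar_of_nonneg hsH).symm

theorem stmt4 (a b T eta Wi Wj Di Dj : ℝ)
    (ha : 0 < a) (hb : 0 < b) (hT : 0 < T) (heta0 : 0 ≤ eta) (heta1 : eta < 1)
    (hcase : a / b > Wi - Wj - 2 * T - 3 * Di - Dj) :
    ∀ s : ℝ, s ≠ (a / b * (1 / (4 * T)) + 1 / 2 + (Wj - Wi) / (4 * T) + (Dj - Di) / (4 * T)) →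
      Udict a b T eta Wi Wj Di Dj s < Udict a b T eta Wi Wj Di Dj (a / b * (1 / (4 * T)) + 1 / 2 + (Wj - Wi) / (4 * T) + (Dj - Di) / (4 * T)) :=
  stmt4_general a b T eta Wi Wj Di Dj ha hb hT heta0 hcase
end

section
/- Proposition 1, case (ii): if a/b < H/(1+η), then U attains a strict global maximum at sL, i.e., for every real s with s ≠ sL one has U(s) < U(sL). -/
theorem stmt5 (a b T eta Wi Wj Di Dj : ℝ)
    (ha : 0 < a) (hb : 0 < b) (hT : 0 < T) (heta0 : 0 ≤ eta) (heta1 : eta < 1)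
    (hcase : a / b < (Wi - Wj - 2 * T - 3 * Di - Dj) / (1 + eta)) :
    ∀ s : ℝ, s ≠ (a / b * ((1 + eta) / (4 * T)) + 1 / 2 + (Wj - Wi) / (4 * T) + (Dj - Di) / (4 * T)) →
      Udict a b T eta Wi Wj Di Dj s < Udict a b T eta Wi Wj Di Dj (a / b * ((1 + eta) / (4 * T)) + 1 / 2 + (Wj - Wi) / (4 * T) + (Dj - Di) / (4 * T)) := by
  intro s hs
  set sL : ℝ := a / b * ((1 + eta) / (4 * T)) + 1 / 2 + (Wj - Wi) / (4 * T) + (Dj - Di) / (4 * T) with hsL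
  have hb' : b ≠ 0 := ne_of_gt hb
  have hT' : T ≠ 0 := ne_of_gt hT
  have heta : (0:ℝ) < 1 + eta := by linarith
  have hab : a / b * b = a := div_mul_cancel₀ a hb'
  have hcase1 : a * (1 + eta) < (Wi - Wj - 2 * T - 3 * Di - Dj) * b :=
    (div_lt_div_iff₀ hb heta).mp hcase
  have hcase' : a / b * (1 + eta) < Wi - Wj - 2 * T - 3 * Di - Dj := by
    rw [div_mul_eq_mul_div, div_lt_iff₀ hb]; exact hcase1
  -- Di + sL * T < 0
  have e : Di + sL * T = (a / b * (1 + eta) + 2 * T + (Wj - Wi) + (Dj - Di) + 4 * Di) / 4 := by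
    rw [hsL]; field_simp; ring
  have hL : Di + sL * T < 0 := by rw [e]; linarith
  -- quadratic identity for Uhat
  have hquad : ∀ u : ℝ, Uhat a b T eta Wi Wj Di Dj u
      = Uhat a b T eta Wi Wj Di Dj sL - 2 * b * T ^ 2 * (u - sL) ^ 2 := by
    intro u
    simp only [Uhat, Ubar, hsL]
    field_simp
    ring
  have hpos : 0 < 2 * b * T ^ 2 * (s - sL) ^ 2 := by
    have h0 : s - sL ≠ 0 := sub_ne_zero.mpr hs
    positivity
  have hUhat : Uhat a b T eta Wi Wj Di Dj s < Uhat a b T eta Wi Wj Di Dj sL := by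
    rw [hquad s]; linarith
  simp only [Udict, if_pos hL]
  by_cases h : Di + s * T < 0
  · rw [if_pos h]; exact hUhat
  · rw [if_neg h]
    push_neg at h
    have : Ubar a b T Wi Wj Di Dj s ≤ Uhat a b T eta Wi Wj Di Dj s := by
      simp only [Uhat]
      nlinarith [mul_nonneg (mul_nonneg ha.le heta0) h]
    linarith
end

section
/- Proposition 1, case (iii): if H/(1+η) ≤ a/b ≤ H, then U attains a strict global maximum at the kink point −Δi/T, i.e., for every real s with s ≠ −Δi/T one has U(s) < U(−Δi/T). -/
theorem stmt6 (a b T eta Wi Wj Di Dj : ℝ)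
    (ha : 0 < a) (hb : 0 < b) (hT : 0 < T) (heta0 : 0 ≤ eta) (heta1 : eta < 1)
    (hcase1 : (Wi - Wj - 2 * T - 3 * Di - Dj) / (1 + eta) ≤ a / b) (hcase2 : a / b ≤ Wi - Wj - 2 * T - 3 * Di - Dj) :
    ∀ s : ℝ, s ≠ -Di / T →
      Udict a b T eta Wi Wj Di Dj s < Udict a b T eta Wi Wj Di Dj (-Di / T) := by
  intro s hs
  have hT' : T ≠ 0 := ne_of_gt hT
  have hs0 : -Di / T * T = -Di := div_mul_cancel₀ _ hT'
  have heta : (0:ℝ) < 1 + eta := by linarith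
  have h1 : a ≤ (Wi - Wj - 2 * T - 3 * Di - Dj) * b := (div_le_iff₀ hb).mp hcase2
  have h2 : (Wi - Wj - 2 * T - 3 * Di - Dj) * b ≤ a * (1 + eta) :=
    (div_le_div_iff₀ heta hb).mp hcase1
  have hd : Di + s * T ≠ 0 := by
    intro h
    apply hs
    field_simp
    linarith
  have hs1 : 2 * (-Di / T) * T = 2 * -Di := by rw [mul_assoc, hs0]
  simp only [Udict, Uhat, Ubar, hs0, hs1]
  norm_num
  by_cases hc : Di + s * T < 0
  · rw [if_pos hc]
    nlinarith [sq_nonneg (Di + s * T), mul_pos hb (mul_pos hT hT),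
      mul_nonneg (sub_nonneg.mpr h2) (neg_nonneg.mpr hc.le),
      mul_pos hb (mul_pos (neg_pos.mpr hc) (neg_pos.mpr hc))]
  · rw [if_neg hc]
    have hc' : 0 < Di + s * T := lt_of_le_of_ne (not_lt.mp hc) (Ne.symm hd)
    nlinarith [mul_nonneg (sub_nonneg.mpr h1) hc'.le,
      mul_pos hb (mul_pos hc' hc')]
end

section
/- Proposition 2, first case (full-keeping corner): if a/b ≥ Ubd, then s = 1 is the strict maximizer of U on the interval [0,1], i.e., for every s with 0 ≤ s ≤ 1 and s ≠ 1 one has U(s) < U(1). -/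
theorem stmt7 (a b T eta Wi Wj Di Dj : ℝ)
    (ha : 0 < a) (hb : 0 < b) (hT : 0 < T) (heta0 : 0 ≤ eta) (heta1 : eta < 1)
    (hcase : a / b ≥ Wi - Wj + Di - Dj + 2 * T) :
    ∀ s : ℝ, 0 ≤ s → s ≤ 1 → s ≠ 1 →
      Udict a b T eta Wi Wj Di Dj s < Udict a b T eta Wi Wj Di Dj 1 := by
  intro s hs0 hs1 hne
  have hslt : s < 1 := lt_of_le_of_ne hs1 hne
  have hab : (Wi - Wj + Di - Dj + 2 * T) * b ≤ a := (le_div_iff₀ hb).mp hcase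
  have hpos : 0 < a - b * (Wi - Wj + Di - Dj + 2 * s * T) := by
    nlinarith [mul_pos hb (mul_pos hT (sub_pos.mpr hslt))]
  have hbar : Ubar a b T Wi Wj Di Dj s < Ubar a b T Wi Wj Di Dj 1 := by
    unfold Ubar
    nlinarith [mul_pos (mul_pos hT (sub_pos.mpr hslt)) hpos]
  have hhat : Uhat a b T eta Wi Wj Di Dj s < Uhat a b T eta Wi Wj Di Dj 1 := by
    unfold Uhat
    have : a * eta * (Di + s * T) ≤ a * eta * (Di + 1 * T) := by
      have : 0 ≤ a * eta := mul_nonneg ha.le heta0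
      nlinarith [mul_pos hT (sub_pos.mpr hslt)]
    linarith
  unfold Udict
  rcases lt_or_ge (Di + 1 * T) 0 with h1 | h1
  · have hsneg : Di + s * T < 0 := by nlinarith
    simp only [if_pos hsneg]
    rw [if_pos (by linarith : Di + 1 * T < 0)]
    exact hhat
  · rw [if_neg (not_lt.mpr h1)]
    by_cases hs : Di + s * T < 0
    · rw [if_pos hs]
      have : Uhat a b T eta Wi Wj Di Dj s ≤ Ubar a b T Wi Wj Di Dj s := by
        unfold Uhat
        nlinarith [mul_nonneg ha.le heta0]
      linarith
    · rw [if_neg hs]; exact hbar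
end

section
/- Proposition 2, second case (full-giving corner): if a/b ≤ Lbd, then s = 0 is the strict maximizer of U on the interval [0,1], i.e., for every s with 0 ≤ s ≤ 1 and s ≠ 0 one has U(s) < U(0). -/
theorem stmt8 (a b T eta Wi Wj Di Dj : ℝ)
    (ha : 0 < a) (hb : 0 < b) (hT : 0 < T) (heta0 : 0 ≤ eta) (heta1 : eta < 1)
    (hcase : a / b ≤ (Wi - Wj + Di - Dj - 2 * T) / (1 + eta)) :
    ∀ s : ℝ, 0 ≤ s → s ≤ 1 → s ≠ 0 →
      Udict a b T eta Wi Wj Di Dj s < Udict a b T eta Wi Wj Di Dj 0 := by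
  intro s hs0 hs1 hsne
  have hs : 0 < s := lt_of_le_of_ne hs0 (Ne.symm hsne)
  have heta : (0:ℝ) < 1 + eta := by linarith
  have hkey : a * (1 + eta) ≤ b * (Wi - Wj + Di - Dj - 2 * T) := by
    rw [div_le_div_iff₀ hb heta] at hcase; linarith
  have hsT : 0 < s * T := mul_pos hs hT
  unfold Udict Uhat Ubar
  have H1 := mul_pos (mul_pos hb hsT) hsT
  have H2 := mul_nonneg (by linarith : (0:ℝ) ≤ b * (Wi - Wj + Di - Dj - 2 * T) - a * (1 + eta)) hsT.le
  have H3 := mul_nonneg (mul_nonneg ha.le heta0) hsT.le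
  split_ifs with h1 h2 h2
  · nlinarith
  · nlinarith
  · nlinarith [mul_nonneg (mul_nonneg ha.le heta0) (by linarith : (0:ℝ) ≤ Di + s * T)]
  · nlinarith
end

section
/- Proposition 2, third case (interior solution), made precise: assume in addition that −T < Δi < 0 (so the kink point −Δi/T lies strictly between 0 and 1). If Lbd < a/b < Ubd, then the unique global maximizer s* of U on ℝ satisfies 0 < s* < 1; in particular the maximizer of U on [0,1] lies in the open interval (0,1). -/
lemma Udict_eq_min (a b T eta Wi Wj Di Dj s : ℝ) (ha : 0 < a) (heta0 : 0 ≤ eta) :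
    Udict a b T eta Wi Wj Di Dj s
      = min (Uhat a b T eta Wi Wj Di Dj s) (Ubar a b T Wi Wj Di Dj s) := by
  unfold Udict
  split_ifs with h
  · rw [min_eq_left]
    unfold Uhat
    nlinarith [mul_nonneg (mul_nonneg ha.le heta0) (le_of_lt (neg_pos.2 h))]
  · rw [min_eq_right]
    unfold Uhat
    nlinarith [mul_nonneg (mul_nonneg ha.le heta0) (not_lt.1 h)]

lemma Ubar_conc (a b T Wi Wj Di Dj x y t : ℝ) (hb : 0 < b) (ht0 : 0 ≤ t) (ht1 : t ≤ 1) :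
    t * Ubar a b T Wi Wj Di Dj x + (1 - t) * Ubar a b T Wi Wj Di Dj y
      ≤ Ubar a b T Wi Wj Di Dj (t * x + (1 - t) * y) := by
  unfold Ubar
  nlinarith [mul_nonneg (mul_nonneg (mul_nonneg hb.le (mul_nonneg ht0 (by linarith : (0:ℝ) ≤ 1 - t))) (sq_nonneg (x - y))) (sq_nonneg T)]

lemma Uhat_conc (a b T eta Wi Wj Di Dj x y t : ℝ) (hb : 0 < b) (ht0 : 0 ≤ t) (ht1 : t ≤ 1) :
    t * Uhat a b T eta Wi Wj Di Dj x + (1 - t) * Uhat a b T eta Wi Wj Di Dj y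
      ≤ Uhat a b T eta Wi Wj Di Dj (t * x + (1 - t) * y) := by
  unfold Uhat Ubar
  nlinarith [mul_nonneg (mul_nonneg (mul_nonneg hb.le (mul_nonneg ht0 (by linarith : (0:ℝ) ≤ 1 - t))) (sq_nonneg (x - y))) (sq_nonneg T)]

set_option maxHeartbeats 2000000 in
theorem stmt9 (a b T eta Wi Wj Di Dj : ℝ)
    (ha : 0 < a) (hb : 0 < b) (hT : 0 < T) (heta0 : 0 ≤ eta) (heta1 : eta < 1)
    (hDi1 : -T < Di) (hDi2 : Di < 0)
    (hL : ((Wi - Wj + Di - Dj - 2 * T) / (1 + eta)) < a / b) (hU : a / b < Wi - Wj + Di - Dj + 2 * T) :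
    (∀ sstar : ℝ,
        (∀ s : ℝ, Udict a b T eta Wi Wj Di Dj s ≤ Udict a b T eta Wi Wj Di Dj sstar) →
        0 < sstar ∧ sstar < 1) ∧
    (∀ sc : ℝ, 0 ≤ sc → sc ≤ 1 →
        (∀ s : ℝ, 0 ≤ s → s ≤ 1 →
          Udict a b T eta Wi Wj Di Dj s ≤ Udict a b T eta Wi Wj Di Dj sc) →
        0 < sc ∧ sc < 1) := by
  set U : ℝ → ℝ := fun s => Udict a b T eta Wi Wj Di Dj s with hU_def
  -- slope at 0 (of Uhat) and minus slope at 1 (of Ubar)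
  set D0 : ℝ := T * (a * (1 + eta) - b * (Wi - Wj + Di - Dj - 2 * T)) with hD0def
  set D1 : ℝ := T * (b * (Wi - Wj + Di - Dj + 2 * T) - a) with hD1def
  clear_value U
  have heta1' : (0:ℝ) < 1 + eta := by linarith
  have hD0 : 0 < D0 :=
    mul_pos hT (by rw [div_lt_div_iff₀ heta1' hb] at hL; nlinarith)
  have hD1 : 0 < D1 :=
    mul_pos hT (by rw [div_lt_iff₀ hb] at hU; nlinarith)
  clear_value D0 D1
  -- choose eps near 0
  set eps : ℝ := min ((-Di) / (2 * T)) (D0 / (4 * b * T ^ 2)) with hepsdef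
  clear_value eps
  have heps0 : 0 < eps := by
    rw [hepsdef]
    exact lt_min (div_pos (by linarith) (by positivity)) (div_pos hD0 (by positivity))
  have hepsT : Di + eps * T < 0 := by
    have h1 : eps ≤ (-Di) / (2 * T) := by rw [hepsdef]; exact min_le_left _ _
    have h2 : eps * (2 * T) ≤ -Di := by
      rw [← le_div_iff₀ (by positivity)]; exact h1
    nlinarith
  have hepsD : 2 * b * T ^ 2 * eps ≤ D0 / 2 := by
    have h1 : eps ≤ D0 / (4 * b * T ^ 2) := by rw [hepsdef]; exact min_le_right _ _
    have h2 : eps * (4 * b * T ^ 2) ≤ D0 := by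
      rw [← le_div_iff₀ (by positivity)]; exact h1
    linarith
  have heps1 : eps < 1 := by nlinarith
  -- choose delta near 1
  set del : ℝ := min ((T + Di) / (2 * T)) (D1 / (4 * b * T ^ 2)) with hdeldef
  have hTDi : 0 < T + Di := by linarith
  clear_value del
  have hdel0 : 0 < del := by
    rw [hdeldef]
    exact lt_min (div_pos hTDi (by positivity)) (div_pos hD1 (by positivity))
  have hdelT : 0 < Di + (1 - del) * T := by
    have h1 : del ≤ (T + Di) / (2 * T) := by rw [hdeldef]; exact min_le_left _ _
    have h2 : del * (2 * T) ≤ T + Di := by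
      rw [← le_div_iff₀ (by positivity)]; exact h1
    nlinarith
  have hdelD : 2 * b * T ^ 2 * del ≤ D1 / 2 := by
    have h1 : del ≤ D1 / (4 * b * T ^ 2) := by rw [hdeldef]; exact min_le_right _ _
    have h2 : del * (4 * b * T ^ 2) ≤ D1 := by
      rw [← le_div_iff₀ (by positivity)]; exact h1
    linarith
  have hdel1 : del < 1 := by nlinarith
  -- key strict inequalities
  have hU0 : U 0 = Uhat a b T eta Wi Wj Di Dj 0 := by
    simp only [hU_def, Udict, zero_mul, add_zero]
    rw [if_pos hDi2]
  have hUe : U eps = Uhat a b T eta Wi Wj Di Dj eps := by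
    simp only [hU_def, Udict]
    rw [if_pos hepsT]
  have hU1 : U 1 = Ubar a b T Wi Wj Di Dj 1 := by
    simp only [hU_def, Udict]
    rw [if_neg (by push_neg; nlinarith)]
  have hUd : U (1 - del) = Ubar a b T Wi Wj Di Dj (1 - del) := by
    simp only [hU_def, Udict]
    rw [if_neg (by push_neg; linarith)]
  have hid0 : Uhat a b T eta Wi Wj Di Dj eps - Uhat a b T eta Wi Wj Di Dj 0
      = eps * (D0 - 2 * b * T ^ 2 * eps) := by
    simp only [Uhat, Ubar, hD0def]; ring
  have hkey0 : U 0 < U eps := by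
    rw [hU0, hUe]
    have hpos : 0 < eps * (D0 - 2 * b * T ^ 2 * eps) :=
      mul_pos heps0 (by linarith)
    linarith [hid0, hpos]
  have hid1 : Ubar a b T Wi Wj Di Dj (1 - del) - Ubar a b T Wi Wj Di Dj 1
      = del * (D1 - 2 * b * T ^ 2 * del) := by
    simp only [Ubar, hD1def]; ring
  have hkey1 : U 1 < U (1 - del) := by
    rw [hU1, hUd]
    have hpos : 0 < del * (D1 - 2 * b * T ^ 2 * del) :=
      mul_pos hdel0 (by linarith)
    linarith [hid1, hpos]
  -- concavity of U
  have hconc : ∀ x y t : ℝ, 0 ≤ t → t ≤ 1 →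
      t * U x + (1 - t) * U y ≤ U (t * x + (1 - t) * y) := by
    intro x y t ht0 ht1
    have ht1' : (0:ℝ) ≤ 1 - t := by linarith
    rw [hU_def]
    simp only
    rw [Udict_eq_min _ _ _ _ _ _ _ _ x ha heta0, Udict_eq_min _ _ _ _ _ _ _ _ y ha heta0,
      Udict_eq_min _ _ _ _ _ _ _ _ (t * x + (1 - t) * y) ha heta0]
    refine le_min ?_ ?_
    · calc t * min (Uhat a b T eta Wi Wj Di Dj x) (Ubar a b T Wi Wj Di Dj x)
            + (1 - t) * min (Uhat a b T eta Wi Wj Di Dj y) (Ubar a b T Wi Wj Di Dj y)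
          ≤ t * Uhat a b T eta Wi Wj Di Dj x + (1 - t) * Uhat a b T eta Wi Wj Di Dj y := by
            gcongr <;> [exact min_le_left _ _; exact min_le_left _ _]
        _ ≤ _ := Uhat_conc a b T eta Wi Wj Di Dj x y t hb ht0 ht1
    · calc t * min (Uhat a b T eta Wi Wj Di Dj x) (Ubar a b T Wi Wj Di Dj x)
            + (1 - t) * min (Uhat a b T eta Wi Wj Di Dj y) (Ubar a b T Wi Wj Di Dj y)
          ≤ t * Ubar a b T Wi Wj Di Dj x + (1 - t) * Ubar a b T Wi Wj Di Dj y := by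
            gcongr <;> [exact min_le_right _ _; exact min_le_right _ _]
        _ ≤ _ := Ubar_conc a b T Wi Wj Di Dj x y t hb ht0 ht1
  constructor
  · intro sstar hmax
    have hmax' : ∀ s : ℝ, U s ≤ U sstar := by
      intro s; rw [hU_def]; exact hmax s
    constructor
    · by_contra h
      push_neg at h
      -- 0 = t * sstar + (1-t) * eps with t = eps/(eps - sstar)
      have hden : 0 < eps - sstar := by linarith
      obtain ⟨t, ht0, ht1, hmid⟩ :
          ∃ t : ℝ, 0 ≤ t ∧ t ≤ 1 ∧ t * sstar + (1 - t) * eps = 0 :=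
        ⟨eps / (eps - sstar), div_nonneg heps0.le hden.le,
          by rw [div_le_one hden]; linarith,
          by field_simp; ring⟩
      have h1 := hconc sstar eps t ht0 ht1
      rw [hmid] at h1
      have h2 : t * U eps ≤ t * U sstar :=
        mul_le_mul_of_nonneg_left (hmax' eps) ht0
      have e1 : t * U eps + (1 - t) * U eps = U eps := by ring
      linarith [hkey0, h1, h2, e1]
    · by_contra h
      push_neg at h
      have hden : 0 < sstar - (1 - del) := by linarith
      obtain ⟨t, ht0, ht1, hmid⟩ :
          ∃ t : ℝ, 0 ≤ t ∧ t ≤ 1 ∧ t * sstar + (1 - t) * (1 - del) = 1 :=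
        ⟨del / (sstar - (1 - del)), div_nonneg hdel0.le hden.le,
          by rw [div_le_one hden]; linarith,
          by field_simp; ring⟩
      have h1 := hconc sstar (1 - del) t ht0 ht1
      rw [hmid] at h1
      have h2 : t * U (1 - del) ≤ t * U sstar :=
        mul_le_mul_of_nonneg_left (hmax' (1 - del)) ht0
      have e1 : t * U (1 - del) + (1 - t) * U (1 - del) = U (1 - del) := by ring
      linarith [hkey1, h1, h2, e1]
  · intro sc hsc0 hsc1 hmax
    have hmax' : ∀ s : ℝ, 0 ≤ s → s ≤ 1 → U s ≤ U sc := by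
      intro s h1 h2; rw [hU_def]; exact hmax s h1 h2
    constructor
    · rcases lt_or_eq_of_le hsc0 with h | h
      · exact h
      · exfalso
        have h3 := hmax' eps heps0.le heps1.le
        rw [← h] at h3
        linarith [hkey0]
    · rcases lt_or_eq_of_le hsc1 with h | h
      · exact h
      · exfalso
        have h3 := hmax' (1 - del) (by linarith) (by linarith)
        rw [h] at h3
        linarith [hkey1]
end

section
/- If a/b ≥ Ubd, then the unique global maximizer s* of U on ℝ satisfies s* ≥ 1. -/
theorem stmt10 (a b T eta Wi Wj Di Dj : ℝ)
    (ha : 0 < a) (hb : 0 < b) (hT : 0 < T) (heta0 : 0 ≤ eta) (heta1 : eta < 1)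
    (hcase : a / b ≥ Wi - Wj + Di - Dj + 2 * T) :
    ∀ sstar : ℝ,
      (∀ s : ℝ, Udict a b T eta Wi Wj Di Dj s ≤ Udict a b T eta Wi Wj Di Dj sstar) →
      1 ≤ sstar := by
  intro sstar hmax
  by_contra h
  push_neg at h
  -- a ≥ b * (Wi - Wj + Di - Dj + 2*T)
  have hab : b * (Wi - Wj + Di - Dj + 2 * T) ≤ a := by
    have := (le_div_iff₀ hb).mp hcase
    linarith [this]
  have hpos : 0 < a - b * (Wi - Wj + Di - Dj + 2 * sstar * T) := by
    nlinarith [mul_pos hb (mul_pos (by linarith : (0:ℝ) < 1 - sstar) (mul_pos (by norm_num : (0:ℝ) < 2) hT))]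
  have hbar : Ubar a b T Wi Wj Di Dj sstar < Ubar a b T Wi Wj Di Dj 1 := by
    have hid : Ubar a b T Wi Wj Di Dj 1 - Ubar a b T Wi Wj Di Dj sstar
        = T * (1 - sstar) * (a - b * (Wi - Wj + Di - Dj + 2 * sstar * T)) := by
      unfold Ubar; ring
    nlinarith [mul_pos (mul_pos hT (by linarith : (0:ℝ) < 1 - sstar)) hpos]
  have key : Udict a b T eta Wi Wj Di Dj sstar < Udict a b T eta Wi Wj Di Dj 1 := by
    unfold Udict
    by_cases h1 : Di + 1 * T < 0
    · have hs : Di + sstar * T < 0 := by nlinarith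
      simp only [if_pos h1, if_pos hs]
      unfold Uhat
      nlinarith [mul_nonneg (mul_nonneg ha.le heta0) (mul_nonneg hT.le (by linarith : (0:ℝ) ≤ 1 - sstar))]
    · simp only [if_neg h1]
      by_cases hs : Di + sstar * T < 0
      · simp only [if_pos hs]
        unfold Uhat
        nlinarith [mul_nonpos_of_nonneg_of_nonpos (mul_nonneg ha.le heta0) hs.le]
      · simp only [if_neg hs]
        exact hbar
  exact absurd (hmax 1) (not_le.mpr key)
end

section
/- If a/b ≤ Lbd, then the unique global maximizer s* of U on ℝ satisfies s* ≤ 0. -/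
theorem stmt11 (a b T eta Wi Wj Di Dj : ℝ)
    (ha : 0 < a) (hb : 0 < b) (hT : 0 < T) (heta0 : 0 ≤ eta) (heta1 : eta < 1)
    (hcase : a / b ≤ (Wi - Wj + Di - Dj - 2 * T) / (1 + eta)) :
    ∀ sstar : ℝ,
      (∀ s : ℝ, Udict a b T eta Wi Wj Di Dj s ≤ Udict a b T eta Wi Wj Di Dj sstar) →
      sstar ≤ 0 := by
  intro sstar hmax
  by_contra hpos
  push_neg at hpos
  have h0 := hmax 0
  have h1eta : (0:ℝ) < 1 + eta := by linarith
  have key : a * (1 + eta) ≤ b * (Wi - Wj + Di - Dj - 2 * T) := by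
    rw [div_le_div_iff₀ hb h1eta] at hcase
    linarith
  have haeta : 0 ≤ a * eta := mul_nonneg ha.le heta0
  have hsT : 0 < sstar * T := mul_pos hpos hT
  have hsq : 0 < b * ((sstar * T) * (sstar * T)) :=
    mul_pos hb (mul_pos hsT hsT)
  have hbar : Ubar a b T Wi Wj Di Dj sstar < Ubar a b T Wi Wj Di Dj 0 := by
    unfold Ubar
    nlinarith [mul_nonneg hsT.le (by nlinarith : (0:ℝ) ≤ b * (Wi - Wj + Di - Dj - 2 * T) - a)]
  have hhat : Uhat a b T eta Wi Wj Di Dj sstar < Uhat a b T eta Wi Wj Di Dj 0 := by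
    unfold Uhat Ubar
    nlinarith [mul_nonneg hsT.le (by nlinarith : (0:ℝ) ≤ b * (Wi - Wj + Di - Dj - 2 * T) - a * (1 + eta))]
  simp only [Udict] at h0
  split_ifs at h0 with hc0 hc1 hc1
  · linarith
  · have : 0 ≤ a * eta * (Di + sstar * T) :=
      mul_nonneg haeta (by linarith)
    simp only [Uhat] at hhat h0
    linarith
  · nlinarith
  · linarith
end

section
/- Proposition 4 (relative trend comparative statics): the constrained maximizer is weakly monotone in the other individual's trend, i.e., for all real numbers d and d' with d ≤ d', one has σ(d) ≤ σ(d'). Equivalently, holding the dictator's own trend Δi fixed, when the other individual's trend parameter Δj = d increases, the dictator's optimal kept share s* on [0,1] weakly increases (so a lower relative trend for the other individual makes the dictator share less). -/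
lemma udict_diff (a b T eta Wi Wj Di d d' s : ℝ) :
    Udict a b T eta Wi Wj Di d' s - Udict a b T eta Wi Wj Di d s
      = b / 4 * (d' - d) * (2 * Di + 4 * s * T - 2 * T - d - d') := by
  unfold Udict Uhat Ubar
  split_ifs <;> ring

theorem stmt13 (a b T eta Wi Wj Di : ℝ)
    (ha : 0 < a) (hb : 0 < b) (hT : 0 < T) (heta0 : 0 ≤ eta) (heta1 : eta < 1)
    (sigma : ℝ → ℝ)
    (hmem : ∀ d : ℝ, 0 ≤ sigma d ∧ sigma d ≤ 1)
    (hmax : ∀ d : ℝ, ∀ s : ℝ, 0 ≤ s → s ≤ 1 →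
      Udict a b T eta Wi Wj Di d s ≤ Udict a b T eta Wi Wj Di d (sigma d)) :
    ∀ d d' : ℝ, d ≤ d' → sigma d ≤ sigma d' := by
  intro d d' hdd
  rcases eq_or_lt_of_le hdd with rfl | hlt
  · exact le_refl _
  by_contra hcon
  push_neg at hcon
  obtain ⟨h0, h1⟩ := hmem d
  obtain ⟨h0', h1'⟩ := hmem d'
  have A := hmax d (sigma d') h0' h1'
  have B := hmax d' (sigma d) h0 h1
  have e1 := udict_diff a b T eta Wi Wj Di d d' (sigma d)
  have e2 := udict_diff a b T eta Wi Wj Di d d' (sigma d')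
  nlinarith [mul_pos hb hT, mul_pos (mul_pos hb hT) (sub_pos.mpr hlt),
    mul_pos (mul_pos (mul_pos hb hT) (sub_pos.mpr hlt)) (sub_pos.mpr hcon)]
end
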